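/- For a positive quadruple point of global type VI (Figure 26 of the paper), all four Reidemeister III moves occurring around the quadruple point are of global type l; hence none of the eight triple points P₁,…,P₄, P̄₁,…,P̄₄ contributes to the 1-cocycle R, and the tetrahedron equation for global type VI holds trivially. -/
import Mathlib


/-
Common combinatorial setting, following T. Fiedler's books and the paper
"A new 1-cocycle based on the Vassiliev invariant v₃".

A (signed) Gauss diagram with one circle is modelled by cutting the circle open
at the base point: the points of the circle are represented by rational numbers,
ordered as they are met when going from the base point along the orientation.
Every arrow has a foot (undercross), a head (overcross) and a writhe ±1, and all
endpoints are pairwise distinct.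
-/

open scoped Classical BigOperators

set_option linter.unusedVariables false

/-- A signed Gauss diagram with one circle, with arrows indexed by `ι`. -/
structure GaussDiagram (ι : Type) where
  foot : ι → ℚ
  head : ι → ℚ
  wr : ι → ℤ
  wr_pm : ∀ i, wr i = 1 ∨ wr i = -1
  inj : Function.Injective (fun p : ι × Bool => if p.2 then head p.1 else foot p.1)

namespace GaussDiagram

/-- The endpoint of arrow `i`: its head if `s = true`, its foot if `s = false`. -/
def pt {ι : Type} (G : GaussDiagram ι) (i : ι) (s : Bool) : ℚ :=
  if s then G.head i else G.foot i

/-- `x` is an endpoint of some arrow of `G`. -/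
def IsEndpoint {ι : Type} (G : GaussDiagram ι) (x : ℚ) : Prop := ∃ i s, G.pt i s = x

/-- Two arrows of a Gauss diagram cross iff their four endpoints interleave on the circle. -/
def Crosses {ι : Type} (G : GaussDiagram ι) (i j : ι) : Prop :=
  Xor' (min (G.foot i) (G.head i) < G.foot j ∧ G.foot j < max (G.foot i) (G.head i))
       (min (G.foot i) (G.head i) < G.head j ∧ G.head j < max (G.foot i) (G.head i))

/-- `x` and `y` (in this order) are adjacent on the circle:
no arrow endpoint lies strictly between them. -/
def Adj {ι : Type} (G : GaussDiagram ι) (x y : ℚ) : Prop :=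
  x < y ∧ ∀ i s, ¬ (x < G.pt i s ∧ G.pt i s < y)

/-- `x` and `y` are adjacent on the circle, in one of the two orders. -/
def AdjPair {ι : Type} (G : GaussDiagram ι) (x y : ℚ) : Prop := G.Adj x y ∨ G.Adj y x

/-- Restriction of a Gauss diagram to the set of arrows satisfying `P`
(i.e. deletion of all the other arrows). -/
def restrict {ι : Type} (G : GaussDiagram ι) (P : ι → Prop) : GaussDiagram {i : ι // P i} where
  foot i := G.foot i.1
  head i := G.head i.1
  wr i := G.wr i.1
  wr_pm i := G.wr_pm i.1
  inj := by
    intro p q h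
    have h2 : ((p.1.1, p.2) : ι × Bool) = (q.1.1, q.2) :=
      G.inj (a₁ := (p.1.1, p.2)) (a₂ := (q.1.1, q.2)) h
    have h3 := congrArg Prod.fst h2
    have h4 := congrArg Prod.snd h2
    obtain ⟨⟨p1, hp1⟩, ps⟩ := p
    obtain ⟨⟨q1, hq1⟩, qs⟩ := q
    simp only [Prod.mk.injEq, Subtype.mk.injEq]
    exact ⟨h3, h4⟩

end GaussDiagram

/-- `cyc3 x y z`: the three points appear in the cyclic order `x, y, z` on the circle
(the circle being cut open at the base point). -/
def cyc3 (x y z : ℚ) : Prop := (x < y ∧ y < z) ∨ (y < z ∧ z < x) ∨ (z < x ∧ x < y)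

/-- `circBetween a x b` : the point `x` lies on the open arc running from `a` to `b`
along the orientation of the circle. -/
def circBetween (a x b : ℚ) : Prop :=
  (a < x ∧ x < b) ∨ (x < b ∧ b < a) ∨ (b < a ∧ a < x)

/-- The three arrows `d`, `hm`, `ml` form the triangle of a Reidemeister III move:
`d` is the crossing between the lowest and the highest branch, `hm` between the middle
and the highest branch, `ml` between the middle and the lowest branch.  The two endpoints
lying on each of the three branches are adjacent on the circle. -/
structure IsRIIITriangle {ι : Type} (G : GaussDiagram ι) (d hm ml : ι) : Prop where
  dhm : d ≠ hm
  dml : d ≠ ml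
  hmml : hm ≠ ml
  /-- the small arc on the highest branch carries the heads of `d` and `hm` -/
  arc_h : G.AdjPair (G.head d) (G.head hm)
  /-- the small arc on the middle branch carries the foot of `hm` and the head of `ml` -/
  arc_m : G.AdjPair (G.foot hm) (G.head ml)
  /-- the small arc on the lowest branch carries the feet of `d` and `ml` -/
  arc_l : G.AdjPair (G.foot d) (G.foot ml)

/-- The triangle is of global type `r` (Figure 9 of the paper): the three small arcs
(highest, middle, lowest branch) occur in the corresponding cyclic order on the circle. -/
def GlobalR {ι : Type} (G : GaussDiagram ι) (d hm ml : ι) : Prop :=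
  cyc3 (G.head d) (G.foot hm) (G.foot d)

/-- The triangle is of global type `l` (Figure 9 of the paper). -/
def GlobalL {ι : Type} (G : GaussDiagram ι) (d hm ml : ι) : Prop :=
  cyc3 (G.head d) (G.foot d) (G.foot hm)

/-- `G'` is obtained from `G` by the Reidemeister III move on the triangle `d, hm, ml`:
all arrows keep their writhes, all arrows other than `d, hm, ml` keep their endpoints, and
within each of the three small arcs of the triangle the two endpoints are transposed
(the middle branch slides to the other side of the crossing `d`). -/
structure RIIIMove {ι : Type} (G G' : GaussDiagram ι) (d hm ml : ι) : Prop where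
  tri : IsRIIITriangle G d hm ml
  tri' : IsRIIITriangle G' d hm ml
  wr_eq : ∀ i, G'.wr i = G.wr i
  off : ∀ i, i ≠ d → i ≠ hm → i ≠ ml → G'.foot i = G.foot i ∧ G'.head i = G.head i
  hd : G'.head d = G.head hm
  hhm : G'.head hm = G.head d
  fhm : G'.foot hm = G.head ml
  hml : G'.head ml = G.foot hm
  fd : G'.foot d = G.foot ml
  fml : G'.foot ml = G.foot d

/-- `α`, `β` is a pair of arrows produced by a Reidemeister II move (Figure 3(b)):
they have opposite writhes and their four endpoints fill two small arcs of the circle,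
two endpoints on each arc, adjacent to each other and to no other endpoint. -/
structure IsRIIPair {ι : Type} (G : GaussDiagram ι) (α β : ι) : Prop where
  ne : α ≠ β
  wr_opp : G.wr α = - G.wr β
  arcs : ∃ s t : Bool, G.AdjPair (G.pt α s) (G.pt β t) ∧ G.AdjPair (G.pt α (!s)) (G.pt β (!t))

/-- `G'` is obtained from `G` by a Reidemeister II move creating the pair of arrows
`Sum.inr false` and `Sum.inr true`; the old arrows keep their endpoints and writhes. -/
structure RIIExt {ι : Type} (G : GaussDiagram ι) (G' : GaussDiagram (ι ⊕ Bool)) : Prop where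
  foot_eq : ∀ i, G'.foot (Sum.inl i) = G.foot i
  head_eq : ∀ i, G'.head (Sum.inl i) = G.head i
  wr_eq : ∀ i, G'.wr (Sum.inl i) = G.wr i
  pair : IsRIIPair G' (Sum.inr false) (Sum.inr true)

/-- An (unsigned) configuration: an arrow diagram without writhes, with a base point.
Positions of the endpoints are natural numbers, read from the base point along the
orientation; only their relative order matters. -/
structure Config where
  k : ℕ
  foot : Fin k → ℕ
  head : Fin k → ℕ
  inj : Function.Injective (fun p : Fin k × Bool => if p.2 then head p.1 else foot p.1)

namespace Config

def pt (A : Config) (a : Fin A.k) (s : Bool) : ℕ := if s then A.head a else A.foot a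

/-- Two arrows of a configuration cross iff their endpoints interleave on the circle. -/
def Crosses (A : Config) (a b : Fin A.k) : Prop :=
  Xor' (min (A.foot a) (A.head a) < A.foot b ∧ A.foot b < max (A.foot a) (A.head a))
       (min (A.foot a) (A.head a) < A.head b ∧ A.head b < max (A.foot a) (A.head a))

end Config

/-- A three-arrow configuration with arrows `f₁ → h₁`, `f₂ → h₂`, `f₃ → h₃`. -/
def mkC3 (f₁ h₁ f₂ h₂ f₃ h₃ : ℕ)
    (hinj : Function.Injective (fun p : Fin 3 × Bool =>
      if p.2 then (![h₁, h₂, h₃] : Fin 3 → ℕ) p.1 else (![f₁, f₂, f₃] : Fin 3 → ℕ) p.1)) :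
    Config := ⟨3, ![f₁, f₂, f₃], ![h₁, h₂, h₃], hinj⟩

/-- A two-arrow configuration with arrows `f₁ → h₁`, `f₂ → h₂`. -/
def mkC2 (f₁ h₁ f₂ h₂ : ℕ)
    (hinj : Function.Injective (fun p : Fin 2 × Bool =>
      if p.2 then (![h₁, h₂] : Fin 2 → ℕ) p.1 else (![f₁, f₂] : Fin 2 → ℕ) p.1)) :
    Config := ⟨2, ![f₁, f₂], ![h₁, h₂], hinj⟩

/-- The Gauss diagram formula `A_{v₃} = Σᵢ cᵢ Aᵢ` for the Vassiliev invariant `v₃`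
(Figure 7 of the paper): five configurations with three arrows and two configurations
with two crossing arrows, all coefficients being `±1`. -/
def v3Formula : List (ℤ × Config) :=
  [ (1, mkC3 1 4 5 2 3 6 (by decide)),
    (1, mkC3 1 4 5 2 6 3 (by decide)),
    (1, mkC3 4 1 2 5 3 6 (by decide)),
    (1, mkC3 1 4 2 5 3 6 (by decide)),
    (-1, mkC3 4 1 5 2 3 6 (by decide)),
    (1, mkC2 1 3 2 4 (by decide)),
    (-1, mkC2 3 1 2 4 (by decide)) ]

/-- A homomorphism of the configuration `A` into the Gauss diagram `G` is an injection of
the arrows of `A` into the arrows of `G` which preserves the directions of the arrows and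
the linear order (read from the base point) of all arrow endpoints. -/
def IsHom (A : Config) {ι : Type} (G : GaussDiagram ι) (f : Fin A.k → ι) : Prop :=
  Function.Injective f ∧ ∀ a b : Fin A.k, ∀ s t : Bool,
    (A.pt a s < A.pt b t ↔ G.pt (f a) s < G.pt (f b) t)

/-- The type of homomorphisms `A → G`. -/
def Hom (A : Config) {ι : Type} (G : GaussDiagram ι) : Type :=
  {f : Fin A.k → ι // IsHom A G f}

noncomputable instance {A : Config} {ι : Type} [Fintype ι] {G : GaussDiagram ι} :
    Fintype (Hom A G) := Subtype.fintype _

/-- The Gauss diagram pairing `⟨F, G⟩ = Σᵢ cᵢ Σ_{φ ∈ Hom(Aᵢ,G)} sign φ`,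
where `sign φ` is the product of the writhes of the image arrows. -/
noncomputable def pairing (F : List (ℤ × Config)) {ι : Type} [Fintype ι]
    (G : GaussDiagram ι) : ℤ :=
  (F.map (fun cA => cA.1 * ∑ φ : Hom cA.2 G, ∏ a, G.wr (φ.1 a))).sum

/-- A homomorphism of (one of the configurations of) the formula `F` into `G`. -/
def FHom (F : List (ℤ × Config)) {ι : Type} (G : GaussDiagram ι) : Type :=
  (j : Fin F.length) × Hom (F.get j).2 G

noncomputable instance {F : List (ℤ × Config)} {ι : Type} [Fintype ι] {G : GaussDiagram ι} :
    Fintype (FHom F G) := by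
  unfold FHom
  infer_instance

namespace FHom

/-- The contribution `c_{i(φ)} · sign(φ)` of a homomorphism of the formula. -/
def contrib {F : List (ℤ × Config)} {ι : Type} {G : GaussDiagram ι} (φ : FHom F G) : ℤ :=
  (F.get φ.1).1 * ∏ a, G.wr (φ.2.1 a)

/-- `i` belongs to the set `S(φ)` of image arrows of `φ`. -/
def inImg {F : List (ℤ × Config)} {ι : Type} {G : GaussDiagram ι} (φ : FHom F G) (i : ι) :
    Prop := ∃ a, φ.2.1 a = i

/-- The set `S(φ)` of image arrows, as a finset. -/
noncomputable def imgFinset {F : List (ℤ × Config)} {ι : Type} [DecidableEq ι]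
    {G : GaussDiagram ι} (φ : FHom F G) : Finset ι := Finset.univ.image φ.2.1

/-- For a homomorphism into a diagram whose arrows form a subtype of `ι`:
`i : ι` belongs to the set of image arrows. -/
def inImgV {F : List (ℤ × Config)} {ι : Type} {P : ι → Prop}
    {G : GaussDiagram {i : ι // P i}} (φ : FHom F G) (i : ι) : Prop :=
  ∃ a, (φ.2.1 a).1 = i

end FHom

/-! ### Realizability of a Gauss diagram by a knot diagram -/

/-- Determinant of two vectors in the plane. -/
def det2 (a b : ℝ × ℝ) : ℝ := a.1 * b.2 - a.2 * b.1

/-- A realization of the signed Gauss diagram `G` by a knot diagram: a generic immersion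
`γ` of the circle (parametrized with period 1) into the plane whose double points, with
their over/under information and writhes, are exactly described by `G`.  The time
`tm i false` is the undercross (foot) visit of crossing `i`, `tm i true` its overcross
(head) visit, and the crossing sign is the sign of `det (v_over, v_under)`. -/
structure Realization {ι : Type} (G : GaussDiagram ι) where
  γ : ℝ → ℝ × ℝ
  per : ∀ u : ℝ, γ (u + 1) = γ u
  smooth : ContDiff ℝ 1 γ
  immersion : ∀ u : ℝ, deriv γ u ≠ 0
  tm : ι → Bool → ℝ
  tm_mem : ∀ i s, tm i s ∈ Set.Ico (0 : ℝ) 1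
  tm_ord : ∀ i s j t, tm i s < tm j t ↔ G.pt i s < G.pt j t
  double : ∀ i, γ (tm i false) = γ (tm i true)
  only_double : ∀ u v : ℝ, u ∈ Set.Ico (0 : ℝ) 1 → v ∈ Set.Ico (0 : ℝ) 1 → u ≠ v →
    γ u = γ v →
    ∃ i, (tm i false = u ∧ tm i true = v) ∨ (tm i true = u ∧ tm i false = v)
  crossing_sign : ∀ i, 0 < (G.wr i : ℝ) * det2 (deriv γ (tm i true)) (deriv γ (tm i false))

/-- `G` is realizable by a knot diagram. -/
def Realizable {ι : Type} (G : GaussDiagram ι) : Prop := Nonempty (Realization G)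

/-- `comp` is (the indicator function of) a splitting of the circle into components after
the oriented smoothing of `G` at all the crossings of `S`:  it is constant on every arc
not containing an endpoint of an arrow of `S`, the two ends of the cut circle are glued,
and at each smoothed crossing the strand arriving at one endpoint is reconnected to the
strand leaving the other endpoint. -/
def SmoothingComp {ι : Type} (G : GaussDiagram ι) (S : Finset ι) (comp : ℚ → Bool) : Prop :=
  (∀ x y : ℚ, x < y → (∀ i ∈ S, ∀ s, ¬ (x < G.pt i s ∧ G.pt i s < y)) → comp x = comp y) ∧
  (∀ x y : ℚ, (∀ i ∈ S, ∀ s, G.pt i s < x) → (∀ i ∈ S, ∀ s, y < G.pt i s) →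
    comp x = comp y) ∧
  (∀ i ∈ S, ∀ x y : ℚ,
    x < G.foot i → (∀ j ∈ S, ∀ s, ¬ (x < G.pt j s ∧ G.pt j s < G.foot i)) →
    G.head i < y → (∀ j ∈ S, ∀ s, ¬ (G.head i < G.pt j s ∧ G.pt j s < y)) →
    comp x = comp y) ∧
  (∀ i ∈ S, ∀ x y : ℚ,
    x < G.head i → (∀ j ∈ S, ∀ s, ¬ (x < G.pt j s ∧ G.pt j s < G.head i)) →
    G.foot i < y → (∀ j ∈ S, ∀ s, ¬ (G.foot i < G.pt j s ∧ G.pt j s < y)) →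
    comp x = comp y)

/-! ### Gauss diagrams of knots in the solid torus: the moduli space `M̃ₙ` -/

/-- A Gauss diagram in `M̃ₙ`: a signed Gauss diagram together with `n` marked points
(the intersections with the disc at infinity), one of which is the base point `∞`
(the point where the circle is cut open); the remaining `n - 1` marked points are
recorded in `marks` and are disjoint from all arrow endpoints. -/
structure TorusGD (ι : Type) (n : ℕ) extends GaussDiagram ι where
  marks : Finset ℚ
  marks_card : marks.card + 1 = n
  marks_ne : ∀ q ∈ marks, ∀ i, q ≠ foot i ∧ q ≠ head i

namespace TorusGD

/-- The homological marking `[q]` of an arrow: the number of marked points (including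
`∞`) on the arc running, along the orientation of the circle, from the head of the
arrow to its foot. -/
noncomputable def marking {ι : Type} {n : ℕ} (D : TorusGD ι n) (i : ι) : ℕ :=
  if D.head i < D.foot i then
    (D.marks.filter (fun q => D.head i < q ∧ q < D.foot i)).card
  else
    (D.marks.filter (fun q => q < D.foot i ∨ D.head i < q)).card + 1

/-- An arrow is persistent if its homological marking is `0` or `n`. -/
def Persistent {ι : Type} {n : ℕ} (D : TorusGD ι n) (i : ι) : Prop :=
  D.marking i = 0 ∨ D.marking i = n

/-- `G_p` : the subdiagram of all persistent arrows of `D`. -/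
noncomputable def psub {ι : Type} {n : ℕ} (D : TorusGD ι n) :
    GaussDiagram {i : ι // D.Persistent i} :=
  D.toGaussDiagram.restrict _

/-- The condition on a homomorphism `φ` of a configuration of the `v₃` formula into the
persistent subdiagram `G_p`, entering in the definition of the weight `W(p)`:  the arrow
`hm` belongs to `S(φ)` and is the first arrow of `S(φ)` met when going from `∞` along the
orientation of the circle. -/
def firstCond {ι : Type} {n : ℕ} (D : TorusGD ι n) (hm : ι)
    (φ : FHom v3Formula D.psub) : Prop :=
  (∃ a, (φ.2.1 a).1 = hm) ∧
  ∀ a, ∀ t : Bool,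
    min (D.foot hm) (D.head hm) ≤ D.toGaussDiagram.pt (φ.2.1 a).1 t

/-- The weight `W(p)` of a triple point `p` with triangle `d, hm, ml` (of type
`r(a,n,a)`): the sum of the contributions `c_{i(φ)} sign(φ)` over all homomorphisms `φ`
of the configurations of the `v₃` formula into the persistent subdiagram `G_p` such that
`hm ∈ S(φ)` and `hm` is the first arrow of `S(φ)` met from `∞`. -/
noncomputable def weightT {ι : Type} [Fintype ι] {n : ℕ} (D : TorusGD ι n)
    (d hm ml : ι) : ℤ :=
  ∑ φ : FHom v3Formula D.psub, if D.firstCond hm φ then FHom.contrib φ else 0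

end TorusGD

/-- The triple point with triangle `d, hm, ml` is of type `r(a, n, a)`:
global type `r` and homological markings `([d], [hm], [ml]) = (a, n, a)`. -/
def TypeRana {ι : Type} {n : ℕ} (D : TorusGD ι n) (a : ℕ) (d hm ml : ι) : Prop :=
  IsRIIITriangle D.toGaussDiagram d hm ml ∧ GlobalR D.toGaussDiagram d hm ml ∧
    D.marking d = a ∧ D.marking hm = n ∧ D.marking ml = a

/-- A Reidemeister III move between two Gauss diagrams of `M̃ₙ`: the underlying
Reidemeister III move of Gauss diagrams, not moving any endpoint over a marked point
(in particular all homological markings are preserved). -/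
structure TorusRIIIMove {ι : Type} {n : ℕ} (D D' : TorusGD ι n) (d hm ml : ι) : Prop where
  move : RIIIMove D.toGaussDiagram D'.toGaussDiagram d hm ml
  marks_eq : D'.marks = D.marks
  marking_eq : ∀ i, D'.marking i = D.marking i

/-- `D'` is obtained from `D` by a Reidemeister II move creating the pair of arrows
`Sum.inr false` and `Sum.inr true`. -/
structure TorusRIIExt {ι : Type} {n : ℕ} (D : TorusGD ι n) (D' : TorusGD (ι ⊕ Bool) n) :
    Prop where
  foot_eq : ∀ i, D'.foot (Sum.inl i) = D.foot i
  head_eq : ∀ i, D'.head (Sum.inl i) = D.head i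
  wr_eq : ∀ i, D'.wr (Sum.inl i) = D.wr i
  marks_eq : D'.marks = D.marks
  pair : IsRIIPair D'.toGaussDiagram (Sum.inr false) (Sum.inr true)

/-- The quantity `Λ`: the sum of the writhes of all arrows `t` of homological marking `0`
which cross both `hm` and `hm'` and are directed from `hm⁺` to `hm⁻` (the foot of `t`
lies on the arc running from the head of `hm` to the foot of `hm`, and its head on the
complementary arc). -/
noncomputable def Lam {ι : Type} [Fintype ι] {n : ℕ} (D : TorusGD ι n) (hm hm' : ι) : ℤ :=
  ∑ t : ι, if D.marking t = 0 ∧ D.toGaussDiagram.Crosses t hm ∧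
      D.toGaussDiagram.Crosses t hm' ∧
      circBetween (D.head hm) (D.foot t) (D.foot hm) ∧
      circBetween (D.foot hm) (D.head t) (D.head hm)
    then D.wr t else 0

/-! ### Quadruple points -/

/-- The six crossings of a quadruple point: four branches, numbered by their height
(branch `j` passes over branch `i` for `i < j`), and a crossing `c i j = c j i`
for every pair of branches. -/
structure QuadData (ι : Type) where
  c : Fin 4 → Fin 4 → ι
  c_symm : ∀ i j, c i j = c j i
  c_inj : ∀ ⦃i j k l : Fin 4⦄, i ≠ j → k ≠ l → c i j = c k l →
    (i = k ∧ j = l) ∨ (i = l ∧ j = k)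

namespace QuadData

/-- The arrow `d` (lowest–highest crossing) of the Reidemeister III move obtained by
forgetting branch `s`. -/
def dOf {ι : Type} (Q : QuadData ι) (s : Fin 4) : ι :=
  Q.c (s.succAbove 0) (s.succAbove 2)

/-- The arrow `hm` (middle–highest crossing) of the Reidemeister III move obtained by
forgetting branch `s`. -/
def hmOf {ι : Type} (Q : QuadData ι) (s : Fin 4) : ι :=
  Q.c (s.succAbove 1) (s.succAbove 2)

/-- The arrow `ml` (middle–lowest crossing) of the Reidemeister III move obtained by
forgetting branch `s`. -/
def mlOf {ι : Type} (Q : QuadData ι) (s : Fin 4) : ι :=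
  Q.c (s.succAbove 0) (s.succAbove 1)

/-- The endpoint of the crossing of branches `i` and `j` lying on branch `i`
(the foot if `i` is the lower branch, the head otherwise). -/
def spt {ι : Type} (Q : QuadData ι) {n : ℕ} (D : TorusGD ι n) (i j : Fin 4) : ℚ :=
  if i < j then D.foot (Q.c i j) else D.head (Q.c i j)

end QuadData

/-- `D` is a diagram of a positive quadruple point with crossings `Q`: all six crossings
are positive, and for each branch `i` its three endpoints fill a small arc of the circle
containing no other arrow endpoint and no marked point. -/
def IsQuadDiagram {ι : Type} {n : ℕ} (D : TorusGD ι n) (Q : QuadData ι) : Prop :=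
  (∀ i j : Fin 4, i ≠ j → D.wr (Q.c i j) = 1) ∧
  (∀ i : Fin 4, ∀ z : ℚ,
    (D.toGaussDiagram.IsEndpoint z ∨ z ∈ D.marks) →
    (∀ j, j ≠ i → z ≠ Q.spt D i j) →
    ∀ j₁ j₂, j₁ ≠ i → j₂ ≠ i → ¬ (Q.spt D i j₁ < z ∧ z < Q.spt D i j₂))

/-- The meridian of a positive quadruple point: a cyclic sequence of eight Gauss diagrams
in `M̃ₙ`, the consecutive ones being related by the Reidemeister III move corresponding to
one of the four triples of branches; each of the four Reidemeister III strata is crossed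
exactly twice (once in each direction). -/
structure QuadMeridian (ι : Type) (n : ℕ) where
  Q : QuadData ι
  D : Fin 8 → TorusGD ι n
  str : Fin 8 → Fin 4
  move : ∀ m : Fin 8,
    TorusRIIIMove (D m) (D (m + 1)) (Q.dOf (str m)) (Q.hmOf (str m)) (Q.mlOf (str m))
  quad : ∀ m, IsQuadDiagram (D m) Q
  twice : ∀ s : Fin 4, (Finset.univ.filter fun m => str m = s).card = 2

/-- The sign with which the meridian crosses a Reidemeister III stratum (the coorientation
of Figure "sign of a Reidemeister III move"), read off from the side of the stratum at the
crossing moment: `+1` iff the head of `d` precedes the head of `hm` on the highest branch. -/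
def wallSign {ι : Type} {n : ℕ} (D : TorusGD ι n) (d hm : ι) : ℤ :=
  if D.head d < D.head hm then 1 else -1

/-- The selected weight of a triple point, as it enters the 1-cocycle `R`:
`W(p)` if the triple is of type `r(a,n,a)` and `∞` lies on the arc `d⁺`
(running from the head of `d` to the foot of `d`), and `0` otherwise. -/
noncomputable def Wsel {ι : Type} [Fintype ι] {n : ℕ} (a : ℕ) (D : TorusGD ι n)
    (d hm ml : ι) : ℤ :=
  if TypeRana D a d hm ml ∧ D.foot d < D.head d then D.weightT d hm ml else 0

/-! ### Statement 15.

For a positive quadruple point of global type VI (Figure 26: the four branch arcs occur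
on the circle in the order of the branches), all four Reidemeister III moves occurring
around the quadruple point are of global type `l`; hence none of the eight triple points
met along the meridian contributes to the 1-cocycle `R`, and the tetrahedron equation for
global type VI holds trivially. -/
theorem tetrahedron_equation_type_VI_trivial
    {ι : Type} [Fintype ι] {n : ℕ} (a : ℕ) (ha : 0 < a) (han : a < n)
    (M : QuadMeridian ι n)
    (hVI : ∀ m : Fin 8, ∀ i i' j j' : Fin 4, j ≠ i → j' ≠ i' → i < i' →
      M.Q.spt (M.D m) i j < M.Q.spt (M.D m) i' j') :
    (∀ m : Fin 8, GlobalL ((M.D m).toGaussDiagram)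
        (M.Q.dOf (M.str m)) (M.Q.hmOf (M.str m)) (M.Q.mlOf (M.str m)) ∧
      ¬ GlobalR ((M.D m).toGaussDiagram)
        (M.Q.dOf (M.str m)) (M.Q.hmOf (M.str m)) (M.Q.mlOf (M.str m)) ∧
      Wsel a (M.D m) (M.Q.dOf (M.str m)) (M.Q.hmOf (M.str m)) (M.Q.mlOf (M.str m)) = 0) ∧
    ∑ m : Fin 8,
      wallSign (M.D m) (M.Q.dOf (M.str m)) (M.Q.hmOf (M.str m)) *
        Wsel a (M.D m) (M.Q.dOf (M.str m)) (M.Q.hmOf (M.str m)) (M.Q.mlOf (M.str m)) = 0 := by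
  have key : ∀ m : Fin 8, GlobalL ((M.D m).toGaussDiagram)
        (M.Q.dOf (M.str m)) (M.Q.hmOf (M.str m)) (M.Q.mlOf (M.str m)) ∧
      ¬ GlobalR ((M.D m).toGaussDiagram)
        (M.Q.dOf (M.str m)) (M.Q.hmOf (M.str m)) (M.Q.mlOf (M.str m)) ∧
      Wsel a (M.D m) (M.Q.dOf (M.str m)) (M.Q.hmOf (M.str m)) (M.Q.mlOf (M.str m)) = 0 := by
    intro m
    set s := M.str m with hs
    set D := M.D m with hD
    set a0 := s.succAbove 0 with ha0
    set a1 := s.succAbove 1 with ha1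
    set a2 := s.succAbove 2 with ha2
    have h01 : a0 < a1 := (Fin.strictMono_succAbove s) (by decide)
    have h12 : a1 < a2 := (Fin.strictMono_succAbove s) (by decide)
    have h02 : a0 < a2 := lt_trans h01 h12
    -- identify endpoints with spt's
    have hfd : D.foot (M.Q.dOf s) = M.Q.spt D a0 a2 := by
      simp [QuadData.dOf, QuadData.spt, if_pos h02, ← ha0, ← ha2]
    have hhd : D.head (M.Q.dOf s) = M.Q.spt D a2 a0 := by
      simp [QuadData.dOf, QuadData.spt, if_neg (not_lt.mpr h02.le), ← ha0, ← ha2,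
        M.Q.c_symm a2 a0]
    have hfhm : D.foot (M.Q.hmOf s) = M.Q.spt D a1 a2 := by
      simp [QuadData.hmOf, QuadData.spt, if_pos h12, ← ha1, ← ha2]
    -- the key inequalities from hypothesis hVI
    have hA : M.Q.spt D a0 a2 < M.Q.spt D a1 a2 :=
      hVI m a0 a1 a2 a2 (ne_of_gt h02) (ne_of_gt h12) h01
    have hB : M.Q.spt D a1 a2 < M.Q.spt D a2 a0 :=
      hVI m a1 a2 a2 a0 (ne_of_gt h12) (ne_of_lt h02) h12
    have hA' : D.foot (M.Q.dOf s) < D.foot (M.Q.hmOf s) := by rw [hfd, hfhm]; exact hA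
    have hB' : D.foot (M.Q.hmOf s) < D.head (M.Q.dOf s) := by rw [hfhm, hhd]; exact hB
    have hL : GlobalL D.toGaussDiagram (M.Q.dOf s) (M.Q.hmOf s) (M.Q.mlOf s) := by
      exact Or.inr (Or.inl ⟨hA', hB'⟩)
    have hnR : ¬ GlobalR D.toGaussDiagram (M.Q.dOf s) (M.Q.hmOf s) (M.Q.mlOf s) := by
      intro h
      rcases h with ⟨h1, h2⟩ | ⟨h1, h2⟩ | ⟨h1, h2⟩ <;> linarith
    refine ⟨hL, hnR, ?_⟩
    unfold Wsel
    rw [if_neg]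
    rintro ⟨⟨_, hR, _⟩, _⟩
    exact hnR hR
  refine ⟨key, ?_⟩
  have : ∀ m : Fin 8, wallSign (M.D m) (M.Q.dOf (M.str m)) (M.Q.hmOf (M.str m)) *
      Wsel a (M.D m) (M.Q.dOf (M.str m)) (M.Q.hmOf (M.str m)) (M.Q.mlOf (M.str m)) = 0 := by
    intro m
    rw [(key m).2.2, mul_zero]
  simp only [this, Finset.sum_const_zero]
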